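/- Let dμ be a measure on ℝ with compact infinite support and Jacobi coefficients a_n, b_n, let x₀ ∉ supp(dμ), d = dist(x₀, supp dμ) > 0, and suppose a_∞ = sup_n a_n < ∞. With δ_∞ = d²/(d + √2·a_∞), there do not exist two consecutive indices j, j+1 such that both p_j and p_{j+1} have a zero in (x₀ − δ_∞, x₀ + δ_∞). -/

import Mathlib

/-!
If `p (n + 1)` vanishes at `x₁`, the Christoffel–Darboux identity shows that the kernel
`A = K_{n+1}(·, x₁)` is an approximate eigenvector of multiplication by `x - x₀`:
`(x - x₀) A = (x₁ - x₀) A + a_{n+1} p_n(x₁) p_{n+1}`; likewise `B = K_{n+2}(·, x₂)` for a zero `x₂`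
of `p (n + 2)`. As `|x - x₀| ≥ d` on the support, `‖(x - x₀) f‖² ≥ d² ‖f‖²` in `L²(μ)` for every
`f = α A + β B`, and orthonormality turns this into the positive semidefiniteness of a `2 × 2`
matrix. Its determinant, the symmetry identity `a_{n+1} p_n(x₁) p_{n+1}(x₂) = (x₂ - x₁) ⟨A, B⟩`
and Cauchy–Schwarz give `D₂ (D₁ + D₂) ≤ a_∞² (x₂ - x₁)²` with `Dᵢ = d² - (xᵢ - x₀)²`, which is
impossible when both `|xᵢ - x₀| < δ_∞`.
-/

open MeasureTheory Polynomial

def measSupport (μ : Measure ℝ) : Set ℝ :=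
  {x | ∀ ε > 0, 0 < μ (Metric.ball x ε)}

open Finset

theorem measSupport_eq_support (μ : Measure ℝ) : measSupport μ = μ.support := by
  ext x
  exact (Metric.nhds_basis_ball.mem_measureSupport).symm

theorem ae_sq_infDist_measSupport_le (μ : Measure ℝ) (x₀ : ℝ) :
    ∀ᵐ x ∂μ, Metric.infDist x₀ (measSupport μ) ^ 2 ≤ (x - x₀) ^ 2 := by
  filter_upwards [measSupport_eq_support μ ▸ Measure.support_mem_ae] with x hx
  rw [← sq_abs (x - x₀), abs_sub_comm, ← Real.dist_eq]
  exact pow_le_pow_left₀ Metric.infDist_nonneg (Metric.infDist_le_dist_of_mem hx) 2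

theorem integrable_eval_of_moments {μ : Measure ℝ}
    (hmom : ∀ n : ℕ, Integrable (fun x : ℝ => |x| ^ n) μ) (q : ℝ[X]) :
    Integrable (fun x => q.eval x) μ := by
  simp_rw [eval_eq_sum_range]
  refine integrable_finsetSum _ fun i _ => ((hmom i).mono' ?_ ?_).const_mul _
  · exact (continuous_pow i).aestronglyMeasurable
  · exact ae_of_all _ fun x => by rw [Real.norm_eq_abs, abs_pow]

section L2Form

variable {μ : Measure ℝ} (hμ : ∀ q : ℝ[X], Integrable (fun x => q.eval x) μ)

include hμ in
theorem integrable_eval_mul_eval (f g : ℝ[X]) :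
    Integrable (fun x => f.eval x * g.eval x) μ := by
  simpa only [eval_mul] using hμ (f * g)

noncomputable def polyL2Form : LinearMap.BilinForm ℝ ℝ[X] :=
  LinearMap.mk₂ ℝ (fun f g => ∫ x, f.eval x * g.eval x ∂μ)
    (fun f₁ f₂ g => by
      simp only [eval_add, add_mul]
      exact integral_add (integrable_eval_mul_eval hμ f₁ g) (integrable_eval_mul_eval hμ f₂ g))
    (fun c f g => by simp only [eval_smul, smul_eq_mul, mul_assoc, integral_const_mul])
    (fun f g₁ g₂ => by
      simp only [eval_add, mul_add]
      exact integral_add (integrable_eval_mul_eval hμ f g₁) (integrable_eval_mul_eval hμ f g₂))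
    (fun c f g => by simp only [eval_smul, smul_eq_mul, mul_left_comm, integral_const_mul])

theorem polyL2Form_apply (f g : ℝ[X]) :
    polyL2Form hμ f g = ∫ x, f.eval x * g.eval x ∂μ := rfl

theorem polyL2Form_isSymm : (polyL2Form hμ).IsSymm :=
  ⟨fun f g => by simp only [polyL2Form_apply, mul_comm]⟩

theorem polyL2Form_mulLeft_apply (q f g : ℝ[X]) :
    polyL2Form hμ (LinearMap.mulLeft ℝ q f) g = polyL2Form hμ f (LinearMap.mulLeft ℝ q g) := by
  simp only [polyL2Form_apply, LinearMap.mulLeft_apply, eval_mul]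
  congr 1 with x
  ring

theorem sq_mul_polyL2Form_le {x₀ d : ℝ} (hd : ∀ᵐ x ∂μ, d ^ 2 ≤ (x - x₀) ^ 2) (f : ℝ[X]) :
    d ^ 2 * polyL2Form hμ f f
      ≤ polyL2Form hμ (LinearMap.mulLeft ℝ (X - C x₀) f) (LinearMap.mulLeft ℝ (X - C x₀) f) := by
  simp only [polyL2Form_apply, LinearMap.mulLeft_apply, ← integral_const_mul]
  refine integral_mono_ae ((integrable_eval_mul_eval hμ f f).const_mul _)
    (integrable_eval_mul_eval hμ _ _) ?_
  filter_upwards [hd] with x hx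
  simp only [eval_mul, eval_sub, eval_X, eval_C]
  nlinarith [mul_self_nonneg (f.eval x)]

end L2Form

section ThreeTermRecurrence

variable (p : ℕ → ℝ[X])

noncomputable def christoffelKernel (n : ℕ) (y : ℝ) : ℝ[X] :=
  ∑ k ∈ range n, (p k).eval y • p k

theorem eval_christoffelKernel (n : ℕ) (x y : ℝ) :
    (christoffelKernel p n y).eval x = ∑ k ∈ range n, (p k).eval y * (p k).eval x := by
  simp only [christoffelKernel, eval_finsetSum, eval_smul, smul_eq_mul]

variable {p} {a b : ℕ → ℝ}
  (hrec : ∀ k x, x * (p k).eval x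
    = a (k + 1) * (p (k + 1)).eval x + b (k + 1) * (p k).eval x
      + (if k = 0 then 0 else a k * (p (k - 1)).eval x))
include hrec

theorem christoffel_darboux (n : ℕ) (x y : ℝ) :
    (x - y) * (christoffelKernel p (n + 1) y).eval x
      = a (n + 1) * ((p (n + 1)).eval x * (p n).eval y - (p n).eval x * (p (n + 1)).eval y) := by
  induction n with
  | zero =>
    have hx := hrec 0 x
    have hy := hrec 0 y
    simp only [if_true] at hx hy
    rw [eval_christoffelKernel, sum_range_one]
    linear_combination (p 0).eval y * hx - (p 0).eval x * hy
  | succ k ih =>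
    have hx := hrec (k + 1) x
    have hy := hrec (k + 1) y
    simp only [Nat.succ_ne_zero, if_false, Nat.add_sub_cancel] at hx hy
    rw [eval_christoffelKernel, sum_range_succ, ← eval_christoffelKernel]
    linear_combination ih + (p (k + 1)).eval y * hx - (p (k + 1)).eval x * hy

theorem X_sub_C_mul_christoffelKernel {n : ℕ} {y : ℝ} (hy : (p (n + 1)).eval y = 0) (x₀ : ℝ) :
    (X - C x₀) * christoffelKernel p (n + 1) y
      = (y - x₀) • christoffelKernel p (n + 1) y + (a (n + 1) * (p n).eval y) • p (n + 1) := by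
  refine Polynomial.funext fun x => ?_
  simp only [eval_mul, eval_sub, eval_X, eval_C, eval_add, eval_smul, smul_eq_mul]
  linear_combination christoffel_darboux hrec n x y - a (n + 1) * (p n).eval x * hy

theorem eval_succ_ne_zero_of_eval_eq_zero (ha : ∀ k, 0 < a k) (hp₀ : ∀ x, (p 0).eval x ≠ 0)
    {k : ℕ} {x : ℝ} (hk : (p k).eval x = 0) : (p (k + 1)).eval x ≠ 0 := by
  induction k with
  | zero => exact absurd hk (hp₀ x)
  | succ k ih =>
    intro hk'
    have h := hrec (k + 1) x
    simp only [hk, hk', Nat.succ_ne_zero, if_false, Nat.add_sub_cancel, mul_zero, zero_add,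
      add_zero, zero_eq_mul] at h
    exact ih (h.resolve_left (ha (k + 1)).ne') hk

end ThreeTermRecurrence

section Orthonormal

variable {p : ℕ → ℝ[X]} {G : LinearMap.BilinForm ℝ ℝ[X]}
  (hG : ∀ k l, G (p k) (p l) = if k = l then 1 else 0)
include hG

theorem christoffelKernel_apply (n j : ℕ) (y : ℝ) :
    G (christoffelKernel p n y) (p j) = if j < n then (p j).eval y else 0 := by
  simp only [christoffelKernel, map_sum, map_smul, LinearMap.sum_apply, LinearMap.smul_apply,
    hG, smul_eq_mul, mul_ite, mul_one, mul_zero, sum_ite_eq', mem_range]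

theorem christoffelKernel_apply_christoffelKernel {n n' : ℕ} (h : n ≤ n') (x y : ℝ) :
    G (christoffelKernel p n x) (christoffelKernel p n' y)
      = ∑ k ∈ range n, (p k).eval x * (p k).eval y := by
  rw [christoffelKernel.eq_def p n' y, map_sum]
  simp only [map_smul, christoffelKernel_apply hG, smul_eq_mul, mul_ite, mul_zero, ← mem_range,
    sum_ite_mem, inter_eq_right.2 (range_subset_range.2 h)]
  exact sum_congr rfl fun k _ => mul_comm _ _

end Orthonormal

section Gram

variable {E : Type*} [AddCommGroup E] [Module ℝ E] {G : LinearMap.BilinForm ℝ E}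
  {T : E →ₗ[ℝ] E} {A B u v : E} {ε₁ ε₂ r s : ℝ}

theorem mul_apply_eq_sub_mul_apply (hG : G.IsSymm) (hT : ∀ f g, G (T f) g = G f (T g))
    (hA : T A = ε₁ • A + r • u) (hB : T B = ε₂ • B + s • v) (hAv : G A v = 0) :
    r * G B u = (ε₂ - ε₁) * G A B := by
  have h := hT A B
  simp only [hA, hB, map_add, map_smul, LinearMap.add_apply, LinearMap.smul_apply,
    smul_eq_mul, hAv, hG.eq u B] at h
  linear_combination h

theorem gram_quadratic_nonneg (hG : G.IsSymm) (hT : ∀ f g, G (T f) g = G f (T g)) {d : ℝ}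
    (hbd : ∀ f, d ^ 2 * G f f ≤ G (T f) (T f))
    (hA : T A = ε₁ • A + r • u) (hB : T B = ε₂ • B + s • v)
    (huu : G u u = 1) (hvv : G v v = 1) (huv : G u v = 0)
    (hAu : G A u = 0) (hAv : G A v = 0) (hBv : G B v = 0) (α β : ℝ) :
    0 ≤ α ^ 2 * (r ^ 2 - (d ^ 2 - ε₁ ^ 2) * G A A) - 2 * α * β * ((d ^ 2 - ε₂ ^ 2) * G A B)
      + β ^ 2 * (s ^ 2 - (d ^ 2 - ε₂ ^ 2) * G B B) := by
  have hrP := mul_apply_eq_sub_mul_apply hG hT hA hB hAv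
  have h := hbd (α • A + β • B)
  simp only [map_add, map_smul, hA, hB, LinearMap.add_apply, LinearMap.smul_apply,
    smul_eq_mul, hG.eq u A, hG.eq v A, hG.eq v B, hG.eq v u, hG.eq B A, hG.eq u B,
    huu, hvv, huv, hAu, hAv, hBv] at h
  linear_combination h + 2 * α * β * ε₂ * hrP

end Gram

theorem le_of_gram_quadratic_nonneg {U V t r s P a D₁ D₂ Δ : ℝ} (hU : 0 < U) (hD₁ : 0 < D₁)
    (hD₂ : 0 < D₂) (hr : r ≠ 0) (hP : P ≠ 0) (hCS : t ^ 2 ≤ U * (V - P ^ 2))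
    (hs : s ^ 2 ≤ a ^ 2 * P ^ 2) (hrP : r * P = Δ * t)
    (hq : ∀ α β : ℝ, 0 ≤ α ^ 2 * (r ^ 2 - D₁ * U) - 2 * α * β * (D₂ * t)
      + β ^ 2 * (s ^ 2 - D₂ * V)) :
    D₂ * (D₁ + D₂) ≤ a ^ 2 * Δ ^ 2 := by
  set W := r ^ 2 - D₁ * U with hW
  have hW0 : 0 ≤ W := by simpa using hq 1 0
  have hdet : (D₂ * t) ^ 2 ≤ W * (s ^ 2 - D₂ * V) := by
    have := discrim_le_zero (a := W) (b := -2 * (D₂ * t)) (c := s ^ 2 - D₂ * V)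
      fun γ => (hq γ 1).trans_eq (by ring)
    rw [discrim] at this
    linarith
  have ht : 0 < t ^ 2 :=
    sq_pos_of_ne_zero fun h => mul_ne_zero hr hP (by rw [hrP, h, mul_zero])
  have hV : U * (s ^ 2 - D₂ * V) ≤ U * (a ^ 2 - D₂) * P ^ 2 - D₂ * t ^ 2 := by
    linarith [mul_le_mul_of_nonneg_left hs hU.le, mul_le_mul_of_nonneg_left hCS hD₂.le]
  have hkey : U * (D₂ * t) ^ 2 ≤ W * (U * (a ^ 2 - D₂) * P ^ 2 - D₂ * t ^ 2) := by
    linarith [mul_le_mul_of_nonneg_left hdet hU.le, mul_le_mul_of_nonneg_left hV hW0]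
  -- multiply by `r ^ 2`, trade `r ^ 2 * P ^ 2` for `Δ ^ 2 * t ^ 2`, and cancel `t ^ 2`
  have hkey' : D₂ * r ^ 2 * (W + D₂ * U) ≤ W * U * (a ^ 2 - D₂) * Δ ^ 2 := by
    have hrP2 : r ^ 2 * P ^ 2 = Δ ^ 2 * t ^ 2 := by rw [← mul_pow, hrP, mul_pow]
    refine le_of_mul_le_mul_right ?_ ht
    linear_combination mul_le_mul_of_nonneg_left hkey (sq_nonneg r) + W * U * (a ^ 2 - D₂) * hrP2
  have hWU : 0 < W * U := by
    refine mul_pos (hW0.lt_of_ne fun h => ?_) hU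
    rw [← h] at hkey'
    linarith [mul_pos (mul_pos hD₂ (sq_pos_of_ne_zero hr)) (mul_pos hD₂ hU)]
  refine le_of_mul_le_mul_left ?_ hWU
  calc W * U * (D₂ * (D₁ + D₂)) ≤ D₂ * r ^ 2 * (W + D₂ * U) := by
        rw [show r ^ 2 = W + D₁ * U by rw [hW]; ring]
        linarith [mul_nonneg hD₂.le (sq_nonneg W),
          mul_nonneg (mul_pos hD₁ (mul_pos hD₂ hD₂)).le (sq_nonneg U)]
    _ ≤ W * U * (a ^ 2 - D₂) * Δ ^ 2 := hkey'
    _ ≤ W * U * (a ^ 2 * Δ ^ 2) := by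
        linarith [mul_nonneg hWU.le (mul_nonneg hD₂.le (sq_nonneg Δ))]

theorem sq_mul_sub_sq_lt {d a δ ε₁ ε₂ : ℝ} (hd : 0 < d) (ha : 0 ≤ a)
    (hδ : δ = d ^ 2 / (d + √2 * a)) (h₁ : ε₁ ^ 2 < δ ^ 2) (h₂ : ε₂ ^ 2 < δ ^ 2) :
    0 < d ^ 2 - ε₁ ^ 2 ∧ 0 < d ^ 2 - ε₂ ^ 2 ∧
      a ^ 2 * (ε₂ - ε₁) ^ 2 < (d ^ 2 - ε₂ ^ 2) * ((d ^ 2 - ε₁ ^ 2) + (d ^ 2 - ε₂ ^ 2)) := by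
  have hsa : 0 ≤ √2 * a := by positivity
  have hδd : δ * (d + √2 * a) = d ^ 2 := by rw [hδ]; field_simp
  have hδ0 : 0 ≤ δ := by rw [hδ]; positivity
  have hδle : δ ≤ d := by nlinarith
  -- `d ^ 2 - δ ^ 2 = δ * (d - δ + √2 * a) ≥ √2 * a * δ`, whence:
  have hC : 2 * a ^ 2 * δ ^ 2 ≤ (d ^ 2 - δ ^ 2) ^ 2 := by
    have h : √2 * a * δ ≤ d ^ 2 - δ ^ 2 := by nlinarith
    calc 2 * a ^ 2 * δ ^ 2 = (√2 * a * δ) ^ 2 := by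
          rw [mul_pow, mul_pow, Real.sq_sqrt zero_le_two]
      _ ≤ (d ^ 2 - δ ^ 2) ^ 2 := pow_le_pow_left₀ (by positivity) h 2
  have hC0 : 0 ≤ d ^ 2 - δ ^ 2 := by nlinarith
  refine ⟨by linarith, by linarith, ?_⟩
  calc a ^ 2 * (ε₂ - ε₁) ^ 2 ≤ a ^ 2 * (4 * δ ^ 2) := by
        gcongr
        nlinarith [sq_nonneg (ε₁ + ε₂)]
    _ ≤ 2 * (d ^ 2 - δ ^ 2) ^ 2 := by linarith
    _ < (d ^ 2 - ε₂ ^ 2) * ((d ^ 2 - ε₁ ^ 2) + (d ^ 2 - ε₂ ^ 2)) := by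
        nlinarith [mul_lt_mul'' (show d ^ 2 - δ ^ 2 < d ^ 2 - ε₂ ^ 2 by linarith)
          (show 2 * (d ^ 2 - δ ^ 2) < (d ^ 2 - ε₁ ^ 2) + (d ^ 2 - ε₂ ^ 2) by linarith) hC0
          (by linarith)]

theorem gram_bound_of_consecutive_roots {p : ℕ → ℝ[X]} {a b : ℕ → ℝ}
    (hrec : ∀ k x, x * (p k).eval x
      = a (k + 1) * (p (k + 1)).eval x + b (k + 1) * (p k).eval x
        + (if k = 0 then 0 else a k * (p (k - 1)).eval x))
    (ha : ∀ k, 0 < a k) (hp₀ : ∀ x, (p 0).eval x ≠ 0) {G : LinearMap.BilinForm ℝ ℝ[X]}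
    (hGs : G.IsSymm) (hG : ∀ k l, G (p k) (p l) = if k = l then 1 else 0) {x₀ d : ℝ}
    (hT : ∀ f g, G (LinearMap.mulLeft ℝ (X - C x₀) f) g = G f (LinearMap.mulLeft ℝ (X - C x₀) g))
    (hbd : ∀ f, d ^ 2 * G f f
      ≤ G (LinearMap.mulLeft ℝ (X - C x₀) f) (LinearMap.mulLeft ℝ (X - C x₀) f))
    {n : ℕ} {x₁ x₂ : ℝ} (h₁ : (p (n + 1)).eval x₁ = 0) (h₂ : (p (n + 2)).eval x₂ = 0)
    (hD₁ : 0 < d ^ 2 - (x₁ - x₀) ^ 2) (hD₂ : 0 < d ^ 2 - (x₂ - x₀) ^ 2)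
    {A : ℝ} (hA : ∀ k, a k ≤ A) :
    (d ^ 2 - (x₂ - x₀) ^ 2) * ((d ^ 2 - (x₁ - x₀) ^ 2) + (d ^ 2 - (x₂ - x₀) ^ 2))
      ≤ A ^ 2 * ((x₂ - x₀) - (x₁ - x₀)) ^ 2 := by
  have hK₁ := X_sub_C_mul_christoffelKernel hrec h₁ x₀
  have hK₂ := X_sub_C_mul_christoffelKernel hrec h₂ x₀
  have hKp := christoffelKernel_apply hG
  have hq := gram_quadratic_nonneg hGs hT hbd hK₁ hK₂ (by simp [hG]) (by simp [hG]) (by simp [hG])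
    (by simp [hKp]) (by simp [hKp]) (by simp [hKp])
  have hrP := mul_apply_eq_sub_mul_apply hGs hT hK₁ hK₂ (by simp [hKp])
  simp only [christoffelKernel_apply_christoffelKernel hG le_rfl,
    christoffelKernel_apply_christoffelKernel hG (Nat.le_succ _), hKp, lt_add_one, if_true] at hq hrP
  refine le_of_gram_quadratic_nonneg ?_ hD₁ hD₂ ?_ ?_ ?_ ?_ hrP hq
  · exact (mul_self_pos.2 (hp₀ x₁)).trans_le <| single_le_sum
      (f := fun k => (p k).eval x₁ * (p k).eval x₁) (fun k _ => mul_self_nonneg _) (by simp)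
  · exact mul_ne_zero (ha _).ne' fun h => eval_succ_ne_zero_of_eval_eq_zero hrec ha hp₀ h h₁
  · exact fun h => eval_succ_ne_zero_of_eval_eq_zero hrec ha hp₀ h h₂
  · rw [sum_range_succ _ (n + 1), ← sq, add_sub_cancel_right]
    simpa only [sq] using sum_mul_sq_le_sq_mul_sq (range (n + 1)) (fun k => (p k).eval x₁)
      fun k => (p k).eval x₂
  · rw [mul_pow]
    exact mul_le_mul_of_nonneg_right (pow_le_pow_left₀ (ha _).le (hA _) 2) (sq_nonneg _)

theorem stmt_7_general (μ : Measure ℝ)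
    (hmom : ∀ n : ℕ, Integrable (fun x : ℝ => |x| ^ n) μ)
    (p : ℕ → Polynomial ℝ) (a b : ℕ → ℝ)
    (ha : ∀ k, 0 < a k)
    (hdeg : ∀ k, (p k).natDegree = k)
    (horth : ∀ k m, ∫ x, (p k).eval x * (p m).eval x ∂μ = if k = m then 1 else 0)
    (hrec : ∀ k x, x * (p k).eval x
      = a (k + 1) * (p (k + 1)).eval x + b (k + 1) * (p k).eval x
        + (if k = 0 then 0 else a k * (p (k - 1)).eval x))
    (x₀ : ℝ)
    (d : ℝ) (hd : d = Metric.infDist x₀ (measSupport μ)) (hdpos : 0 < d)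
    (aInf : ℝ) (hbdd : BddAbove (Set.range a)) (haInf : aInf = ⨆ k, a k)
    (δ : ℝ) (hδ : δ = d ^ 2 / (d + Real.sqrt 2 * aInf)) :
    ¬ ∃ j : ℕ, (∃ x ∈ Set.Ioo (x₀ - δ) (x₀ + δ), (p j).eval x = 0) ∧
      (∃ y ∈ Set.Ioo (x₀ - δ) (x₀ + δ), (p (j + 1)).eval y = 0) := by
  rintro ⟨j, ⟨x₁, hx₁, h₁⟩, ⟨x₂, hx₂, h₂⟩⟩
  have hμ := integrable_eval_of_moments hmom
  have hp₀ : ∀ x, (p 0).eval x ≠ 0 := fun x h =>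
    (degree_pos_of_root (fun h₀ => by simpa [h₀] using horth 0 0) h).not_ge
      (natDegree_eq_zero_iff_degree_le_zero.1 (hdeg 0))
  obtain _ | n := j
  · exact hp₀ x₁ h₁
  have haInf_ge : ∀ k, a k ≤ aInf := fun k => haInf ▸ le_ciSup hbdd k
  have hsq : ∀ x ∈ Set.Ioo (x₀ - δ) (x₀ + δ), (x - x₀) ^ 2 < δ ^ 2 := fun x hx =>
    sq_lt_sq' (by linarith [hx.1]) (by linarith [hx.2])
  obtain ⟨hD₁, hD₂, hlt⟩ := sq_mul_sub_sq_lt hdpos ((ha 0).le.trans (haInf_ge 0)) hδ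
    (hsq x₁ hx₁) (hsq x₂ hx₂)
  refine hlt.not_ge (gram_bound_of_consecutive_roots hrec ha hp₀ (polyL2Form_isSymm hμ) horth
    (polyL2Form_mulLeft_apply hμ _) (sq_mul_polyL2Form_le hμ ?_) h₁ h₂ hD₁ hD₂ haInf_ge)
  exact hd ▸ ae_sq_infDist_measSupport_le μ x₀

/-- Theorem 1, uniform version: with `a_∞ = sup_n a_n < ∞` and
`δ_∞ = d²/(d + √2 a_∞)`, no two consecutive `p_j`, `p_{j+1}` both have a zero in
`(x₀ − δ_∞, x₀ + δ_∞)`. -/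
theorem stmt_7 (μ : Measure ℝ)
    (hmom : ∀ n : ℕ, Integrable (fun x : ℝ => |x| ^ n) μ)
    (hcpt : IsCompact (measSupport μ))
    (hinf : (measSupport μ).Infinite)
    (p : ℕ → Polynomial ℝ) (a b : ℕ → ℝ)
    (ha : ∀ k, 0 < a k)
    (hdeg : ∀ k, (p k).natDegree = k)
    (hlead : ∀ k, 0 < (p k).leadingCoeff)
    (horth : ∀ k m, ∫ x, (p k).eval x * (p m).eval x ∂μ = if k = m then 1 else 0)
    (hrec : ∀ k x, x * (p k).eval x
      = a (k + 1) * (p (k + 1)).eval x + b (k + 1) * (p k).eval x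
        + (if k = 0 then 0 else a k * (p (k - 1)).eval x))
    (x₀ : ℝ) (hx₀ : x₀ ∉ measSupport μ)
    (d : ℝ) (hd : d = Metric.infDist x₀ (measSupport μ)) (hdpos : 0 < d)
    (aInf : ℝ) (hbdd : BddAbove (Set.range a)) (haInf : aInf = ⨆ k, a k)
    (δ : ℝ) (hδ : δ = d ^ 2 / (d + Real.sqrt 2 * aInf)) :
    ¬ ∃ j : ℕ, (∃ x ∈ Set.Ioo (x₀ - δ) (x₀ + δ), (p j).eval x = 0) ∧
      (∃ y ∈ Set.Ioo (x₀ - δ) (x₀ + δ), (p (j + 1)).eval y = 0) :=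
  stmt_7_general μ hmom p a b ha hdeg horth hrec x₀ d hd hdpos aInf hbdd haInf δ hδ
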